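/- Let 𝓔 be a collection of admissible subsets of ℝ^d, let Q ∈ 𝓔, and let 𝓔(Q) denote the collection of sets of 𝓔 contained in Q. Let τ ∈ (0,1/2) and s ∈ (0,1/2) be such that (τ,s) is a John–Strömberg pair for 𝓔. Let f : Q → ℕ ∪ {0} be measurable with J(f,E,s) ≤ 1/2 for every E ∈ 𝓔(Q), and let σ satisfy 2τ/(1+2τ) < σ ≤ 1/2. Then for every bounded closed subinterval I' of positive length contained in I = (0, λ(Q)), one has J(f^*, I', σ) ≤ sup_{E ∈ 𝓔(Q)} J(f, E, s), where f^* is the non-increasing rearrangement of f. -/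

import Mathlib

/-!
For ℕ-valued `f` the rearrangement `f^*` is read off the measures `w k` of the level sets
`{x ∈ Q | k ≤ f x}`: `f^* = n` on `[w (n + 1), w n)`. Splitting `Q` into `{f < k}`, `{f > k}` and
`{f = k}`, the John–Strömberg pair property would produce `W ∈ 𝓔(Q)` with `J(f, W, s) ≥ 1` unless
`min (|Q| - w k) (w (k + 1)) ≤ τ (w k - w (k + 1))`: each level `{f = k}` is large compared with
everything above it or with everything below it. A discrete intermediate value argument then
finds `n` with `f^* ∈ {n, n + 1}` off a part of `[a, b]` of relative measure `≤ τ / (1 + τ) < σ`,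
so `J(f^*, [a, b], σ) ≤ 1 / 2`. If instead `J(f, W, s) < 1 / 2` on all of `𝓔(Q)`, the same
splitting without a middle part shows that every level set is null or conull in `Q`, so `f^*` is
constant on `[a, b]` and `J(f^*, [a, b], σ) = 0`.
-/

open MeasureTheory Set

/-- The John–Strömberg functional
`J(f,E,s) = inf_{c ∈ ℝ} inf {α ≥ 0 : μ({x ∈ E : |f(x) − c| > α}) < s·μ(E)}`. -/
noncomputable def JS {X : Type*} [MeasurableSpace X] (μ : Measure X)
    (f : X → ℝ) (E : Set X) (s : ℝ) : ℝ :=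
  sInf {α : ℝ | 0 ≤ α ∧ ∃ c : ℝ, μ {x ∈ E | α < |f x - c|} < ENNReal.ofReal s * μ E}

/-- An admissible set: measurable with positive finite measure. -/
def Admissible {X : Type*} [MeasurableSpace X] (μ : Measure X) (E : Set X) : Prop :=
  MeasurableSet E ∧ 0 < μ E ∧ μ E < ⊤

/-- `(τ,s)` is a John–Strömberg pair for the collection `𝓔`. -/
def IsJSPair {X : Type*} [MeasurableSpace X] (μ : Measure X)
    (𝓔 : Set (Set X)) (τ s : ℝ) : Prop :=
  0 < τ ∧ 0 < s ∧
  ∀ Q ∈ 𝓔, ∀ Ep Em G : Set X,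
    MeasurableSet Ep → MeasurableSet Em → MeasurableSet G →
    Disjoint Ep Em → Disjoint Ep G → Disjoint Em G →
    Q = Ep ∪ Em ∪ G →
    ENNReal.ofReal τ * μ G < min (μ Ep) (μ Em) →
    ∃ W ∈ 𝓔, W ⊆ Q ∧ ENNReal.ofReal s * μ W ≤ min (μ (W ∩ Ep)) (μ (W ∩ Em))

/-- The non-increasing rearrangement `g^*(t) = inf {α > 0 : μ({x : g x > α}) ≤ t}`. -/
noncomputable def rearr {X : Type*} [MeasurableSpace X] (μ : Measure X)
    (g : X → ℝ) (t : ℝ) : ℝ :=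
  sInf {α : ℝ | 0 < α ∧ μ {x | α < g x} ≤ ENNReal.ofReal t}

open scoped ENNReal

section JohnStromberg

variable {X : Type*} [MeasurableSpace X] {μ : Measure X} {f : X → ℝ} {E W : Set X} {s : ℝ}

lemma JS_nonneg : 0 ≤ JS μ f E s :=
  Real.sInf_nonneg fun _ hα => hα.1

lemma JS_le_of_measure_lt {K : ℝ} (hK : 0 ≤ K) (c : ℝ)
    (h : μ {x ∈ E | K < |f x - c|} < ENNReal.ofReal s * μ E) : JS μ f E s ≤ K := by
  refine le_of_forall_gt_imp_ge_of_dense fun α hα => ?_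
  refine csInf_le ⟨0, fun _ hβ => hβ.1⟩ ⟨hK.trans hα.le, c, (measure_mono ?_).trans_lt h⟩
  exact fun x hx => ⟨hx.1, hα.trans hx.2⟩

lemma exists_measure_natCast_lt_abs_lt (hf : Measurable f) (hE : MeasurableSet E)
    (hE' : μ E ≠ ∞) {ε : ℝ≥0∞} (hε : 0 < ε) :
    ∃ n : ℕ, μ {x ∈ E | (n : ℝ) < |f x|} < ε := by
  have hanti : Antitone fun n : ℕ => {x ∈ E | (n : ℝ) < |f x|} :=
    fun m n hmn x hx => ⟨hx.1, lt_of_le_of_lt (by exact_mod_cast hmn) hx.2⟩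
  have hempty : (⋂ n : ℕ, {x ∈ E | (n : ℝ) < |f x|}) = ∅ := by
    refine eq_empty_of_forall_notMem fun x hx => ?_
    obtain ⟨n, hn⟩ := exists_nat_gt |f x|
    exact (mem_iInter.1 hx n).2.not_gt hn
  have hlim := tendsto_measure_iInter_atTop (μ := μ) (s := fun n : ℕ => {x ∈ E | (n : ℝ) < |f x|})
    (fun n => (hE.inter (measurableSet_lt measurable_const hf.abs)).nullMeasurableSet) hanti
    ⟨0, measure_ne_top_of_subset (fun x hx => hx.1) hE'⟩
  rw [hempty, measure_empty] at hlim
  exact (hlim.eventually_lt_const hε).exists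

lemma div_two_le_JS_of_separated (hf : Measurable f) (hW : Admissible μ W) (hs : 0 < s)
    {P M : Set X} (hP : P ⊆ W) (hM : M ⊆ W) {θ γ : ℝ}
    (hPf : ∀ x ∈ P, f x ≤ θ) (hMf : ∀ x ∈ M, θ + γ ≤ f x)
    (hmin : ENNReal.ofReal s * μ W ≤ min (μ P) (μ M)) : γ / 2 ≤ JS μ f W s := by
  obtain ⟨hWm, hW0, hWfin⟩ := hW
  obtain ⟨n, hn⟩ := exists_measure_natCast_lt_abs_lt hf hWm hWfin.ne
    (ENNReal.mul_pos (ENNReal.ofReal_pos.2 hs).ne' hW0.ne')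
  refine le_csInf ⟨n, n.cast_nonneg, 0, by simpa using hn⟩ ?_
  rintro α ⟨-, c, hc⟩
  by_contra! hα
  -- whatever `c` is, one of `P`, `M` lies at distance `> γ / 2 > α` from it
  have hcover : P ⊆ {x ∈ W | α < |f x - c|} ∨ M ⊆ {x ∈ W | α < |f x - c|} := by
    rcases le_or_gt c (θ + γ / 2) with hc' | hc'
    · exact Or.inr fun x hx => ⟨hM hx, lt_abs.2 (Or.inl (by linarith [hMf x hx]))⟩
    · exact Or.inl fun x hx => ⟨hP hx, lt_abs.2 (Or.inr (by linarith [hPf x hx]))⟩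
  refine hc.not_ge (hmin.trans ?_)
  rcases hcover with h | h
  · exact min_le_of_left_le (measure_mono h)
  · exact min_le_of_right_le (measure_mono h)

lemma IsJSPair.exists_div_two_le_JS {𝓔 : Set (Set X)} {τ : ℝ} {Q : Set X}
    (hpair : IsJSPair μ 𝓔 τ s) (h𝓔 : ∀ E ∈ 𝓔, Admissible μ E) (hQ : Q ∈ 𝓔) (hf : Measurable f)
    {Ep Em G : Set X} (hEp : MeasurableSet Ep) (hEm : MeasurableSet Em) (hG : MeasurableSet G)
    (hpm : Disjoint Ep Em) (hpG : Disjoint Ep G) (hmG : Disjoint Em G) (hQ_eq : Q = Ep ∪ Em ∪ G)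
    {θ γ : ℝ} (hEpf : ∀ x ∈ Ep, f x ≤ θ) (hEmf : ∀ x ∈ Em, θ + γ ≤ f x)
    (hlt : τ * μ.real G < min (μ.real Ep) (μ.real Em)) :
    ∃ W ∈ 𝓔, W ⊆ Q ∧ γ / 2 ≤ JS μ f W s := by
  obtain ⟨hτ, hs, hsplit⟩ := hpair
  have hfin : ∀ A ⊆ Q, μ A ≠ ∞ := fun A hA => measure_ne_top_of_subset hA (h𝓔 Q hQ).2.2.ne
  have hEpQ : Ep ⊆ Q := by rw [hQ_eq]; exact subset_union_left.trans subset_union_left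
  have hEmQ : Em ⊆ Q := by rw [hQ_eq]; exact subset_union_right.trans subset_union_left
  have hGQ : G ⊆ Q := by rw [hQ_eq]; exact subset_union_right
  have hlt' : ENNReal.ofReal τ * μ G < min (μ Ep) (μ Em) := by
    rw [← ofReal_measureReal (hfin G hGQ), ← ofReal_measureReal (hfin Ep hEpQ),
      ← ofReal_measureReal (hfin Em hEmQ), ← ENNReal.ofReal_mul hτ.le, ← ENNReal.ofReal_min]
    exact (ENNReal.ofReal_lt_ofReal_iff ((mul_nonneg hτ.le measureReal_nonneg).trans_lt hlt)).2 hlt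
  obtain ⟨W, hW, hWQ, hWmin⟩ := hsplit Q hQ Ep Em G hEp hEm hG hpm hpG hmG hQ_eq hlt'
  exact ⟨W, hW, hWQ, div_two_le_JS_of_separated hf (h𝓔 W hW) hs inter_subset_left
    inter_subset_left (fun x hx => hEpf x hx.2) (fun x hx => hEmf x hx.2) hWmin⟩

end JohnStromberg

section Rearrangement

variable {X : Type*} [MeasurableSpace X] {μ : Measure X} {g : X → ℝ} {t β : ℝ}

lemma rearr_le (hβ : 0 ≤ β) (h : μ {x | β < g x} ≤ ENNReal.ofReal t) : rearr μ g t ≤ β :=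
  le_of_forall_gt_imp_ge_of_dense fun _ hα => csInf_le ⟨0, fun _ hγ => hγ.1.le⟩
    ⟨hβ.trans_lt hα, (measure_mono fun _ hx => hα.trans hx).trans h⟩

lemma le_rearr (hne : ∃ α, 0 < α ∧ μ {x | α < g x} ≤ ENNReal.ofReal t)
    (h : ENNReal.ofReal t < μ {x | β ≤ g x}) : β ≤ rearr μ g t := by
  refine le_csInf hne fun _ ⟨_, hα⟩ => ?_
  by_contra! hαβ
  exact (h.trans_le (measure_mono fun _ hx => hαβ.trans_le hx)).not_ge hα

end Rearrangement

section UpperLevel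

variable {X : Type*} {Q : Set X} {f : X → ℝ}

def upperLevel (Q : Set X) (f : X → ℝ) (k : ℕ) : Set X := {x ∈ Q | (k : ℝ) ≤ f x}

lemma upperLevel_subset (k : ℕ) : upperLevel Q f k ⊆ Q := fun _ hx => hx.1

lemma upperLevel_antitone : Antitone (upperLevel Q f) :=
  fun _ _ hmn _ hx => ⟨hx.1, le_trans (by exact_mod_cast hmn) hx.2⟩

lemma measurableSet_upperLevel [MeasurableSpace X] (hQ : MeasurableSet Q) (hf : Measurable f)
    (k : ℕ) : MeasurableSet (upperLevel Q f k) :=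
  hQ.inter (measurableSet_le measurable_const hf)

lemma upperLevel_zero (hfnat : ∀ x ∈ Q, ∃ n : ℕ, f x = n) : upperLevel Q f 0 = Q := by
  refine Subset.antisymm (upperLevel_subset 0) fun x hx => ⟨hx, ?_⟩
  obtain ⟨n, hn⟩ := hfnat x hx
  simp [hn]

lemma natCast_add_one_le_of_lt (hfnat : ∀ x ∈ Q, ∃ n : ℕ, f x = n) {x : X} (hx : x ∈ Q)
    {k : ℕ} (h : (k : ℝ) < f x) : (k : ℝ) + 1 ≤ f x := by
  obtain ⟨n, hn⟩ := hfnat x hx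
  rw [hn] at h ⊢
  exact_mod_cast h

lemma le_natCast_sub_one_of_mem_diff (hfnat : ∀ x ∈ Q, ∃ n : ℕ, f x = n) {x : X} {k : ℕ}
    (hx : x ∈ Q \ upperLevel Q f k) : f x ≤ k - 1 := by
  obtain ⟨n, hn⟩ := hfnat x hx.1
  have hlt : f x < k := not_le.1 fun h => hx.2 ⟨hx.1, h⟩
  rw [hn] at hlt ⊢
  have : (n : ℝ) + 1 ≤ k := by exact_mod_cast hlt
  linarith

lemma setOf_natCast_lt_indicator_subset (hfnat : ∀ x ∈ Q, ∃ n : ℕ, f x = n) (k : ℕ) :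
    {x | (k : ℝ) < Q.indicator f x} ⊆ upperLevel Q f (k + 1) := by
  intro x hx
  by_cases hxQ : x ∈ Q
  · rw [mem_ofPred_eq, indicator_of_mem hxQ] at hx
    exact ⟨hxQ, by exact_mod_cast natCast_add_one_le_of_lt hfnat hxQ hx⟩
  · rw [mem_ofPred_eq, indicator_of_notMem hxQ] at hx
    exact absurd hx (not_lt.2 k.cast_nonneg)

variable [MeasurableSpace X] {μ : Measure X} {t : ℝ}

lemma rearr_indicator_le (hfnat : ∀ x ∈ Q, ∃ n : ℕ, f x = n) (hQ : μ Q ≠ ∞) (ht : 0 ≤ t)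
    {k : ℕ} (h : μ.real (upperLevel Q f (k + 1)) ≤ t) : rearr μ (Q.indicator f) t ≤ k :=
  rearr_le k.cast_nonneg <| (measure_mono (setOf_natCast_lt_indicator_subset hfnat k)).trans <|
    (ENNReal.le_ofReal_iff_toReal_le (measure_ne_top_of_subset (upperLevel_subset _) hQ) ht).2 h

lemma le_rearr_indicator (hQ : μ Q ≠ ∞) (ht : 0 ≤ t) {m k : ℕ}
    (hm : μ.real (upperLevel Q f m) ≤ t) (hk : t < μ.real (upperLevel Q f k)) :
    k ≤ rearr μ (Q.indicator f) t := by
  have hfin : ∀ n, μ (upperLevel Q f n) ≠ ∞ :=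
    fun n => measure_ne_top_of_subset (upperLevel_subset n) hQ
  refine le_rearr ⟨m + 1, by positivity, (measure_mono ?_).trans
    ((ENNReal.le_ofReal_iff_toReal_le (hfin m) ht).2 hm)⟩
    (((ENNReal.ofReal_lt_iff_lt_toReal ht (hfin k)).2 hk).trans_le (measure_mono ?_))
  · intro x hx
    have hxQ : x ∈ Q := by
      by_contra hxQ
      rw [mem_ofPred_eq, indicator_of_notMem hxQ] at hx
      linarith [m.cast_nonneg (α := ℝ)]
    rw [mem_ofPred_eq, indicator_of_mem hxQ] at hx
    exact ⟨hxQ, by linarith⟩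
  · intro x hx
    rw [mem_ofPred_eq, indicator_of_mem hx.1]
    exact hx.2

lemma exists_measureReal_upperLevel_le (hQm : MeasurableSet Q) (hQ : μ Q ≠ ∞)
    (hf : Measurable f) {a : ℝ} (ha : 0 < a) : ∃ k, μ.real (upperLevel Q f k) ≤ a := by
  obtain ⟨n, hn⟩ := exists_measure_natCast_lt_abs_lt hf hQm hQ (ENNReal.ofReal_pos.2 ha)
  refine ⟨n + 1, ENNReal.toReal_le_of_le_ofReal ha.le ((measure_mono ?_).trans hn.le)⟩
  intro x hx
  have : (n : ℝ) + 1 ≤ f x := by exact_mod_cast hx.2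
  exact ⟨hx.1, by linarith [le_abs_self (f x)]⟩

section JSPair

variable {𝓔 : Set (Set X)} {τ s : ℝ}

lemma IsJSPair.measureReal_upperLevel_gap (hpair : IsJSPair μ 𝓔 τ s)
    (h𝓔 : ∀ E ∈ 𝓔, Admissible μ E) (hQ : Q ∈ 𝓔) (hf : Measurable f)
    (hfnat : ∀ x ∈ Q, ∃ n : ℕ, f x = n) (hJ : ∀ W ∈ 𝓔, W ⊆ Q → JS μ f W s < 1) (k : ℕ) :
    min (μ.real Q - μ.real (upperLevel Q f k)) (μ.real (upperLevel Q f (k + 1))) ≤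
      τ * (μ.real (upperLevel Q f k) - μ.real (upperLevel Q f (k + 1))) := by
  obtain ⟨hQm, -, hQfin⟩ := h𝓔 Q hQ
  have hm := measurableSet_upperLevel hQm hf
  have hsub : upperLevel Q f (k + 1) ⊆ upperLevel Q f k := upperLevel_antitone k.le_succ
  have hfin : μ (upperLevel Q f k) ≠ ∞ :=
    measure_ne_top_of_subset (upperLevel_subset k) hQfin.ne
  by_contra! hlt
  obtain ⟨W, hW, hWQ, hJW⟩ := hpair.exists_div_two_le_JS h𝓔 hQ hf
    (hQm.diff (hm k)) (hm (k + 1)) ((hm k).diff (hm (k + 1)))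
    (disjoint_sdiff_left.mono_right hsub) (disjoint_sdiff_left.mono_right sdiff_subset)
    disjoint_sdiff_right
    (by rw [union_assoc, union_sdiff_cancel hsub, sdiff_union_of_subset (upperLevel_subset k)])
    (θ := k - 1) (γ := 2)
    (fun x hx => le_natCast_sub_one_of_mem_diff hfnat hx)
    (fun x hx => by have := hx.2; push_cast at this; linarith)
    (by rwa [measureReal_sdiff hsub (hm (k + 1)) hfin,
      measureReal_sdiff (upperLevel_subset k) (hm k) hQfin.ne])
  linarith [hJ W hW hWQ]

lemma IsJSPair.measureReal_upperLevel_eq_zero_or_eq (hpair : IsJSPair μ 𝓔 τ s)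
    (h𝓔 : ∀ E ∈ 𝓔, Admissible μ E) (hQ : Q ∈ 𝓔) (hf : Measurable f)
    (hfnat : ∀ x ∈ Q, ∃ n : ℕ, f x = n) (hJ : ∀ W ∈ 𝓔, W ⊆ Q → JS μ f W s < 1 / 2) (k : ℕ) :
    μ.real (upperLevel Q f k) = 0 ∨ μ.real (upperLevel Q f k) = μ.real Q := by
  obtain ⟨hQm, -, hQfin⟩ := h𝓔 Q hQ
  have hm := measurableSet_upperLevel hQm hf k
  by_contra! h
  obtain ⟨W, hW, hWQ, hJW⟩ := hpair.exists_div_two_le_JS h𝓔 hQ hf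
    (hQm.diff hm) hm MeasurableSet.empty disjoint_sdiff_left (disjoint_empty _) (disjoint_empty _)
    (by rw [union_empty, sdiff_union_of_subset (upperLevel_subset k)])
    (θ := k - 1) (γ := 1)
    (fun x hx => le_natCast_sub_one_of_mem_diff hfnat hx)
    (fun x hx => by linarith [hx.2])
    (by
      rw [measureReal_empty, mul_zero, measureReal_sdiff (upperLevel_subset k) hm hQfin.ne]
      exact lt_min (sub_pos.2 ((measureReal_mono (upperLevel_subset k) hQfin.ne).lt_of_ne h.2))
        (measureReal_nonneg.lt_of_ne h.1.symm))
  linarith [hJ W hW hWQ]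

end JSPair

end UpperLevel

lemma exists_and_of_not_imp_succ {P R : ℕ → Prop} (h0 : R 0) (hstep : ∀ n, ¬P n → R (n + 1))
    (hP : ∃ n, P n) : ∃ n, P n ∧ R n := by
  classical
  refine ⟨Nat.find hP, Nat.find_spec hP, ?_⟩
  rcases h : Nat.find hP with _ | m
  · exact h0
  · exact hstep m (Nat.find_min hP (by omega))

/-- The two summands on the left are the lengths of the parts of `[a, b]` below `W (n + 2)` and
above `W n`. -/
lemma exists_clamp_gap_le {W : ℕ → ℝ} {a b τ : ℝ} (ha : 0 ≤ a) (hab : a ≤ b) (hτ : 0 ≤ τ)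
    (hW : Antitone W) (hbW : b < W 0)
    (hgap : ∀ k, min (W 0 - W k) (W (k + 1)) ≤ τ * (W k - W (k + 1)))
    (hsmall : ∃ k, W k ≤ a) :
    ∃ n, (1 + τ) * ((max a (min b (W (n + 2))) - a) + (b - max a (min b (W n)))) ≤
      τ * (b - a) := by
  set V : ℕ → ℝ := fun k => max a (min b (W k)) with hVdef
  have hV : Antitone V := fun m n h => max_le_max le_rfl (min_le_min le_rfl (hW h))
  have hVa : ∀ k, W k ≤ a → V k = a := fun k h => max_eq_left ((min_le_right _ _).trans h)
  have hVb : ∀ k, b ≤ W k → V k = b := fun k h => by simp [hVdef, min_eq_left h, hab]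
  have hVW : ∀ k, a ≤ W k → W k ≤ b → V k = W k :=
    fun k h₁ h₂ => by simp [hVdef, min_eq_right h₂, h₁]
  have hstep : ∀ n, ¬(V (n + 2) - a ≤ τ * (V (n + 1) - V (n + 2))) →
      b - V (n + 1) ≤ τ * (V (n + 1) - V (n + 2)) := by
    intro n hn
    by_cases hbn : b ≤ W (n + 1)
    · simpa [hVb (n + 1) hbn] using mul_nonneg hτ (sub_nonneg.2 (hV (Nat.le_succ (n + 1))))
    have haW : a < W (n + 2) := by
      by_contra! h
      refine hn ?_
      simpa [hVa (n + 2) h] using mul_nonneg hτ (sub_nonneg.2 (hV (Nat.le_succ (n + 1))))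
    have hW₂ : W (n + 2) ≤ W (n + 1) := hW (Nat.le_succ _)
    simp only [hVW (n + 1) (haW.le.trans hW₂) (not_le.1 hbn).le,
      hVW (n + 2) haW.le (hW₂.trans (not_le.1 hbn).le)] at hn ⊢
    -- the second alternative of `hgap (n + 1)` would contradict `hn`, since `0 ≤ a`
    rcases min_le_iff.1 (hgap (n + 1)) with h | h
    · linarith [hW (Nat.zero_le (n + 1))]
    · linarith
  have hP : ∃ n, V (n + 2) - a ≤ τ * (V (n + 1) - V (n + 2)) := by
    obtain ⟨k, hk⟩ := hsmall
    refine ⟨k, ?_⟩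
    simpa [hVa (k + 2) ((hW (by omega)).trans hk)] using
      mul_nonneg hτ (sub_nonneg.2 (hV (Nat.le_succ (k + 1))))
  obtain ⟨n, hlow, hhigh⟩ := exists_and_of_not_imp_succ
    (R := fun n => b - V n ≤ τ * (V n - V (n + 1)))
    (by simpa [hVb 0 hbW.le] using mul_nonneg hτ (sub_nonneg.2 (hV (Nat.zero_le 1)))) hstep hP
  refine ⟨n, ?_⟩
  change (1 + τ) * ((V (n + 2) - a) + (b - V n)) ≤ τ * (b - a)
  linarith

lemma volume_Icc_diff_Ico_le {a b u v : ℝ} (hab : a ≤ b) :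
    volume (Icc a b \ Ico u v) ≤
      ENNReal.ofReal ((max a (min b u) - a) + (b - max a (min b v))) := by
  have hsub : Icc a b \ Ico u v ⊆ Icc a (max a (min b u)) ∪ Icc (max a (min b v)) b := by
    rintro t ⟨⟨hat, htb⟩, ht⟩
    rcases lt_or_ge t u with htu | hut
    · exact Or.inl ⟨hat, le_max_of_le_right (le_min htb htu.le)⟩
    · have hvt : v ≤ t := not_lt.1 fun htv => ht ⟨hut, htv⟩
      exact Or.inr ⟨max_le hat (min_le_of_right_le hvt), htb⟩
  calc volume (Icc a b \ Ico u v)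
      ≤ volume (Icc a (max a (min b u))) + volume (Icc (max a (min b v)) b) :=
        (measure_mono hsub).trans (measure_union_le _ _)
    _ = _ := by
      rw [Real.volume_Icc, Real.volume_Icc, ← ENNReal.ofReal_add
        (sub_nonneg.2 (le_max_left _ _)) (sub_nonneg.2 (max_le hab (min_le_left _ _)))]

section RearrangedIndicator

variable {X : Type*} [MeasurableSpace X] {μ : Measure X} {Q : Set X} {f : X → ℝ} {a b σ : ℝ}

lemma JS_rearr_indicator_le_half (hfnat : ∀ x ∈ Q, ∃ n : ℕ, f x = n) (hQ : μ Q ≠ ∞)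
    {τ : ℝ} (hτ : 0 ≤ τ) (hσ : τ / (1 + τ) < σ) (ha : 0 ≤ a) (hab : a < b) (hbQ : b < μ.real Q)
    (hgap : ∀ k, min (μ.real Q - μ.real (upperLevel Q f k)) (μ.real (upperLevel Q f (k + 1))) ≤
      τ * (μ.real (upperLevel Q f k) - μ.real (upperLevel Q f (k + 1))))
    (hsmall : ∃ k, μ.real (upperLevel Q f k) ≤ a) :
    JS volume (rearr μ (Q.indicator f)) (Icc a b) σ ≤ 1 / 2 := by
  set W : ℕ → ℝ := fun k => μ.real (upperLevel Q f k)
  have hW0 : W 0 = μ.real Q := congrArg μ.real (upperLevel_zero hfnat)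
  have hW : Antitone W := fun m n h =>
    measureReal_mono (upperLevel_antitone h) (measure_ne_top_of_subset (upperLevel_subset m) hQ)
  obtain ⟨k₀, hk₀⟩ := hsmall
  obtain ⟨n, hn⟩ := exists_clamp_gap_le ha hab.le hτ hW (hW0 ▸ hbQ) (hW0 ▸ hgap) ⟨k₀, hk₀⟩
  set ε := (max a (min b (W (n + 2))) - a) + (b - max a (min b (W n)))
  have hε0 : 0 ≤ ε := add_nonneg (sub_nonneg.2 (le_max_left _ _))
    (sub_nonneg.2 (max_le hab.le (min_le_left _ _)))
  rw [div_lt_iff₀ (by positivity)] at hσ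
  have hεσ : ε < σ * (b - a) := by nlinarith
  have hσ0 : 0 ≤ σ := by nlinarith
  -- off the bad set, `W (n + 2) ≤ t < W n` pins `rearr` between `n` and `n + 1`
  refine JS_le_of_measure_lt (by norm_num) (n + 1 / 2) ?_
  calc volume {t ∈ Icc a b | 1 / 2 < |rearr μ (Q.indicator f) t - (n + 1 / 2)|}
      ≤ volume (Icc a b \ Ico (W (n + 2)) (W n)) := by
        refine measure_mono fun t ⟨ht, hdev⟩ => ⟨ht, fun ⟨h₁, h₂⟩ => hdev.not_ge ?_⟩
        have ht0 : 0 ≤ t := ha.trans ht.1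
        have hlo : (n : ℝ) ≤ rearr μ (Q.indicator f) t :=
          le_rearr_indicator hQ ht0 (hk₀.trans ht.1) h₂
        have hhi : rearr μ (Q.indicator f) t ≤ (n + 1 : ℕ) := rearr_indicator_le hfnat hQ ht0 h₁
        push_cast at hhi
        rw [abs_le]
        constructor <;> linarith
    _ ≤ ENNReal.ofReal ε := volume_Icc_diff_Ico_le hab.le
    _ < ENNReal.ofReal (σ * (b - a)) := ENNReal.ofReal_lt_ofReal_iff'.2 ⟨hεσ, hε0.trans_lt hεσ⟩
    _ = ENNReal.ofReal σ * volume (Icc a b) := by rw [Real.volume_Icc, ENNReal.ofReal_mul hσ0]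

lemma JS_rearr_indicator_nonpos (hfnat : ∀ x ∈ Q, ∃ n : ℕ, f x = n) (hQ : μ Q ≠ ∞)
    (hσ : 0 < σ) (ha : 0 ≤ a) (hab : a < b) (hbQ : b < μ.real Q)
    (hdich : ∀ k, μ.real (upperLevel Q f k) = 0 ∨ μ.real (upperLevel Q f k) = μ.real Q)
    (hsmall : ∃ k, μ.real (upperLevel Q f k) ≤ a) :
    JS volume (rearr μ (Q.indicator f)) (Icc a b) σ ≤ 0 := by
  have hW : Antitone fun k => μ.real (upperLevel Q f k) := fun m n h =>
    measureReal_mono (upperLevel_antitone h) (measure_ne_top_of_subset (upperLevel_subset m) hQ)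
  obtain ⟨m, hm₁, hm⟩ := exists_and_of_not_imp_succ
    (P := fun k => μ.real (upperLevel Q f (k + 1)) ≤ a)
    (R := fun k => a < μ.real (upperLevel Q f k))
    (by rw [upperLevel_zero hfnat]; linarith) (fun k hk => not_le.1 hk)
    (hsmall.imp fun k hk => (hW k.le_succ).trans hk)
  -- `upperLevel Q f m` is not null, hence conull, so `rearr` is `m` on all of `[a, b]`
  have hmQ : μ.real (upperLevel Q f m) = μ.real Q := (hdich m).resolve_left (ha.trans_lt hm).ne'
  refine JS_le_of_measure_lt le_rfl m ?_
  have hempty : {t ∈ Icc a b | 0 < |rearr μ (Q.indicator f) t - m|} = ∅ := by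
    refine eq_empty_of_forall_notMem fun t ⟨ht, hdev⟩ => hdev.ne' ?_
    have ht0 : 0 ≤ t := ha.trans ht.1
    rw [abs_eq_zero, sub_eq_zero]
    exact le_antisymm (rearr_indicator_le hfnat hQ ht0 (hm₁.trans ht.1))
      (le_rearr_indicator hQ ht0 (hm₁.trans ht.1) (hmQ ▸ ht.2.trans_lt hbQ))
  rw [hempty, measure_empty, Real.volume_Icc]
  exact ENNReal.mul_pos (ENNReal.ofReal_pos.2 hσ).ne' (ENNReal.ofReal_pos.2 (sub_pos.2 hab)).ne'

end RearrangedIndicator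

theorem stmt4 {d : ℕ} (𝓔 : Set (Set (Fin d → ℝ)))
    (h𝓔 : ∀ E ∈ 𝓔, Admissible volume E)
    (Q : Set (Fin d → ℝ)) (hQ : Q ∈ 𝓔)
    (τ s : ℝ)
    (hpair : IsJSPair volume 𝓔 τ s)
    (f : (Fin d → ℝ) → ℝ) (hf : Measurable f)
    (hfnat : ∀ x ∈ Q, ∃ n : ℕ, f x = n)
    (hfJ : ∀ E ∈ 𝓔, E ⊆ Q → JS volume f E s ≤ 1/2)
    (σ : ℝ) (hσ1 : 2 * τ / (1 + 2 * τ) < σ)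
    (a b : ℝ) (ha : 0 < a) (hab : a < b) (hb : b < (volume Q).toReal) :
    JS volume (rearr volume (Q.indicator f)) (Set.Icc a b) σ ≤
      ⨆ E : {E : Set (Fin d → ℝ) // E ∈ 𝓔 ∧ E ⊆ Q}, JS volume f E.1 s := by
  obtain ⟨hQm, -, hQfin⟩ := h𝓔 Q hQ
  have hbdd :
      BddAbove (range fun E : {E : Set (Fin d → ℝ) // E ∈ 𝓔 ∧ E ⊆ Q} => JS volume f E.1 s) :=
    ⟨1 / 2, by rintro _ ⟨E, rfl⟩; exact hfJ E.1 E.2.1 E.2.2⟩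
  have hle_sup : ∀ W ∈ 𝓔, W ⊆ Q →
      JS volume f W s ≤ ⨆ E : {E : Set (Fin d → ℝ) // E ∈ 𝓔 ∧ E ⊆ Q}, JS volume f E.1 s :=
    fun W hW hWQ => le_ciSup hbdd ⟨W, hW, hWQ⟩
  have hsmall := exists_measureReal_upperLevel_le hQm hQfin.ne hf ha
  have hτ : 0 < τ := hpair.1
  have hσ : 0 < σ := (by positivity : 0 < 2 * τ / (1 + 2 * τ)).trans hσ1
  by_cases hhalf : ∃ W ∈ 𝓔, W ⊆ Q ∧ 1 / 2 ≤ JS volume f W s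
  · obtain ⟨W, hW, hWQ, hJW⟩ := hhalf
    have hgap := hpair.measureReal_upperLevel_gap h𝓔 hQ hf hfnat fun E hE hEQ =>
      (hfJ E hE hEQ).trans_lt one_half_lt_one
    have hτσ : τ / (1 + τ) < σ := by
      rw [div_lt_iff₀ (by positivity)] at hσ1 ⊢
      linarith
    exact (JS_rearr_indicator_le_half hfnat hQfin.ne hτ.le hτσ ha.le hab hb hgap hsmall).trans
      (hJW.trans (hle_sup W hW hWQ))
  · push Not at hhalf
    have hdich := hpair.measureReal_upperLevel_eq_zero_or_eq h𝓔 hQ hf hfnat hhalf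
    exact (JS_rearr_indicator_nonpos hfnat hQfin.ne hσ ha.le hab hb hdich hsmall).trans
      (JS_nonneg.trans (hle_sup Q hQ subset_rfl))
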